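/- arXiv:1403.4876 — 4 statements merged into one kernel-verified Lean document; each statement's English description precedes it below -/
import Mathlib

section
/- In a bi-orderable group, if g^n commutes with h for some n > 0, then g commutes with h. -/
def IsLeftInvariant {G : Type*} [Group G] (r : G → G → Prop) : Prop :=
  ∀ f g h : G, r g h → r (f * g) (f * h)

def IsRightInvariant {G : Type*} [Group G] (r : G → G → Prop) : Prop :=
  ∀ f g h : G, r g h → r (g * f) (h * f)

def IsLeftOrderable (G : Type*) [Group G] : Prop :=
  ∃ r : G → G → Prop, IsStrictTotalOrder G r ∧ IsLeftInvariant r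

def IsBiOrderable (G : Type*) [Group G] : Prop :=
  ∃ r : G → G → Prop, IsStrictTotalOrder G r ∧ IsLeftInvariant r ∧ IsRightInvariant r

/-- `P` is the positive cone of a left-ordering: a subsemigroup such that
`G = {1} ⊔ P ⊔ P⁻¹` (disjointly). -/
def IsPositiveCone {G : Type*} [Group G] (P : Set G) : Prop :=
  (∀ a ∈ P, ∀ b ∈ P, a * b ∈ P) ∧
  (∀ g : G, g = 1 ∨ g ∈ P ∨ g⁻¹ ∈ P) ∧
  (1 : G) ∉ P ∧
  (∀ g : G, ¬(g ∈ P ∧ g⁻¹ ∈ P))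

/-!
In a bi-ordered group `a < b` gives `a ^ n < b ^ n` for `n > 0`, so `x ↦ x ^ n` is injective.
The conjugate `h g h⁻¹` has `n`-th power `h g ^ n h⁻¹ = g ^ n`, hence equals `g`.
-/

section BiInvariant

variable {G : Type*} [Group G] {r : G → G → Prop}

theorem rel_mul_mul_of_rel [IsTrans G r] (hl : IsLeftInvariant r) (hr : IsRightInvariant r)
    {a b c d : G} (hab : r a b) (hcd : r c d) : r (a * c) (b * d) :=
  _root_.trans (hr c a b hab) (hl b c d hcd)

theorem rel_pow_pow_of_rel [IsTrans G r] (hl : IsLeftInvariant r) (hr : IsRightInvariant r)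
    {a b : G} (hab : r a b) : ∀ {m : ℕ}, 0 < m → r (a ^ m) (b ^ m)
  | 1, _ => by simpa using hab
  | m + 2, _ => by
    rw [pow_succ a, pow_succ b]
    exact rel_mul_mul_of_rel hl hr (rel_pow_pow_of_rel hl hr hab m.succ_pos) hab

theorem eq_of_pow_eq_pow_of_biInvariant [IsStrictTotalOrder G r] (hl : IsLeftInvariant r)
    (hr : IsRightInvariant r) {a b : G} {n : ℕ} (hn : 0 < n) (hpow : a ^ n = b ^ n) : a = b := by
  rcases trichotomous_of r a b with hab | hab | hba
  · exact absurd (hpow ▸ rel_pow_pow_of_rel hl hr hab hn) (irrefl _)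
  · exact hab
  · exact absurd (hpow ▸ rel_pow_pow_of_rel hl hr hba hn) (irrefl _)

end BiInvariant

theorem IsBiOrderable.pow_left_injective {G : Type*} [Group G] (hG : IsBiOrderable G) {n : ℕ}
    (hn : 0 < n) : Function.Injective fun a : G => a ^ n := by
  obtain ⟨r, _, hl, hr⟩ := hG
  exact fun _ _ => eq_of_pow_eq_pow_of_biInvariant hl hr hn

theorem biorderable_commute_of_pow_commute {G : Type*} [Group G]
    (hG : IsBiOrderable G) (g h : G) (n : ℕ) (hn : 0 < n)
    (hc : Commute (g ^ n) h) : Commute g h := by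
  have hconj : (h * g * h⁻¹) ^ n = g ^ n := by
    rw [conj_pow, mul_inv_eq_iff_eq_mul]
    exact hc.eq.symm
  have := hG.pow_left_injective hn hconj
  rwa [mul_inv_eq_iff_eq_mul, eq_comm] at this
end

section
/- For any group G, the set LO(G) of positive cones of left-orderings of G is a closed subset of 2^G with the product topology, and hence is compact. -/
/-! Each condition defining a positive cone constrains at most three coordinates of the
indicator `χ : G → Bool`, so it cuts out a clopen subset of `2^G`. Hence `LO(G)` is an
intersection of closed sets, and it is compact because `2^G` is compact by Tychonoff. -/

theorem isClosed_setOf_forall {X ι : Type*} [TopologicalSpace X] {p : ι → X → Prop}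
    (h : ∀ i, IsClosed {x | p i x}) : IsClosed {x | ∀ i, p i x} := by
  simpa only [Set.ofPred_forall] using isClosed_iInter h

theorem isClosed_setOf_comp {ι X : Type*} [TopologicalSpace X] [DiscreteTopology X] {n : ℕ}
    (f : Fin n → ι) (p : (Fin n → X) → Prop) : IsClosed {x : ι → X | p (x ∘ f)} :=
  (isClosed_discrete {y | p y}).preimage (continuous_pi fun k => continuous_apply (f k))

def positiveCones (G : Type*) [Group G] : Set (G → Bool) :=
  {χ | (∀ a b : G, χ a = true → χ b = true → χ (a * b) = true) ∧
    (∀ g : G, g = 1 ∨ χ g = true ∨ χ g⁻¹ = true) ∧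
    χ 1 = false ∧ (∀ g : G, ¬(χ g = true ∧ χ g⁻¹ = true))}

theorem isClosed_positiveCones (G : Type*) [Group G] : IsClosed (positiveCones G) :=
  (isClosed_setOf_forall fun a => isClosed_setOf_forall fun b =>
      isClosed_setOf_comp ![a, b, a * b] fun y => y 0 = true → y 1 = true → y 2 = true).inter <|
    (isClosed_setOf_forall fun g =>
      isClosed_setOf_comp ![g, g⁻¹] fun y => g = 1 ∨ y 0 = true ∨ y 1 = true).inter <|
    (isClosed_setOf_comp ![1] fun y => y 0 = false).inter <|
    isClosed_setOf_forall fun g =>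
      isClosed_setOf_comp ![g, g⁻¹] fun y => ¬(y 0 = true ∧ y 1 = true)

/-- The space `LO(G)` of positive cones of left-orderings of `G`, viewed inside
`2^G = G → Bool` with the product (Tychonoff) topology, is closed and compact. -/
theorem LO_closed_and_compact (G : Type*) [Group G] :
    IsClosed {χ : G → Bool | (∀ a b : G, χ a = true → χ b = true → χ (a * b) = true) ∧
        (∀ g : G, g = 1 ∨ χ g = true ∨ χ g⁻¹ = true) ∧
        χ 1 = false ∧ (∀ g : G, ¬(χ g = true ∧ χ g⁻¹ = true))} ∧
    IsCompact {χ : G → Bool | (∀ a b : G, χ a = true → χ b = true → χ (a * b) = true) ∧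
        (∀ g : G, g = 1 ∨ χ g = true ∨ χ g⁻¹ = true) ∧
        χ 1 = false ∧ (∀ g : G, ¬(χ g = true ∧ χ g⁻¹ = true))} :=
  ⟨isClosed_positiveCones G, (isClosed_positiveCones G).isCompact⟩
end

section
/- Let G be a group generated by a finite set X, and for each k let B_k(G) be the set of elements expressible as products of at most k generators and their inverses. If for every k ≥ 1 there exists a subset Q ⊆ B_k(G) with (Q·Q) ∩ B_k(G) ⊆ Q and B_k(G) = {1} ⊔ Q ⊔ Q⁻¹, then G is left-orderable. -/
/-- The `k`-ball of `G` with respect to a finite generating set `X`: all elements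
expressible as products of at most `k` generators and their inverses. -/
def ball {G : Type*} [Group G] (X : Finset G) (k : ℕ) : Set G :=
  {g : G | ∃ l : List G, l.length ≤ k ∧ (∀ x ∈ l, x ∈ X ∨ x⁻¹ ∈ X) ∧ l.prod = g}

open Filter

def IsPositiveConeOn {G : Type*} [Group G] (B Q : Set G) : Prop :=
  (∀ a ∈ Q, ∀ b ∈ Q, a * b ∈ B → a * b ∈ Q) ∧
  (∀ g ∈ B, g = 1 ∨ g ∈ Q ∨ g⁻¹ ∈ Q) ∧
  (1 : G) ∉ Q ∧ (∀ g : G, ¬(g ∈ Q ∧ g⁻¹ ∈ Q))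

section Ball

variable {G : Type*} [Group G] (X : Finset G)

lemma ball_mono {j k : ℕ} (hjk : j ≤ k) : ball X j ⊆ ball X k :=
  fun _ ⟨l, hl, hX, hprod⟩ => ⟨l, hl.trans hjk, hX, hprod⟩

lemma exists_mem_ball_of_mem_closure {g : G} (hg : g ∈ Subgroup.closure (X : Set G)) :
    ∃ k, g ∈ ball X k := by
  rw [← Subgroup.mem_toSubmonoid, Subgroup.closure_toSubmonoid] at hg
  obtain ⟨l, hl, rfl⟩ := Submonoid.exists_list_of_mem_closure hg
  exact ⟨l.length, l, le_rfl, fun x hx => by simpa using hl x hx, rfl⟩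

lemma eventually_mem_ball (hX : Subgroup.closure (X : Set G) = ⊤) (g : G) :
    ∀ᶠ k in atTop, g ∈ ball X k := by
  obtain ⟨n, hn⟩ := exists_mem_ball_of_mem_closure X (hX ▸ Subgroup.mem_top g)
  filter_upwards [eventually_ge_atTop n] with k hk using ball_mono X hk hn

end Ball

lemma IsPositiveCone.isLeftOrderable {G : Type*} [Group G] {P : Set G}
    (hP : IsPositiveCone P) : IsLeftOrderable G := by
  obtain ⟨hmul, htri, hone, -⟩ := hP
  refine ⟨fun g h => g⁻¹ * h ∈ P, { irrefl := ?irrefl, trans := ?trans, trichotomous := ?trich },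
    fun f g h hgh => by simpa [mul_assoc] using hgh⟩
  case irrefl => exact fun g hg => hone (by simpa using hg)
  case trans => exact fun a b c hab hbc => by simpa [mul_assoc] using hmul _ hab _ hbc
  case trich =>
    intro a b hab hba
    rcases htri (a⁻¹ * b) with h | h | h
    · exact inv_mul_eq_one.1 h
    · exact (hab h).elim
    · exact (hba (by simpa using h)).elim

lemma isPositiveCone_ultralimit {G ι : Type*} [Group G]
    (U : Ultrafilter ι) {B Q : ι → Set G} (hQ : ∀ i, IsPositiveConeOn (B i) (Q i))
    (hB : ∀ g, ∀ᶠ i in (U : Filter ι), g ∈ B i) :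
    IsPositiveCone {g | ∀ᶠ i in (U : Filter ι), g ∈ Q i} := by
  refine ⟨fun a ha b hb => ?_, fun g => ?_, fun hone => ?_, fun g ⟨hg, hg'⟩ => ?_⟩
  · filter_upwards [ha, hb, hB (a * b)] with i hai hbi hi using (hQ i).1 a hai b hbi hi
  · refine or_iff_not_imp_left.2 fun hg1 => Ultrafilter.eventually_or.1 ?_
    filter_upwards [hB g] with i hi
    exact ((hQ i).2.1 g hi).resolve_left hg1
  · obtain ⟨i, hi⟩ := hone.exists
    exact (hQ i).2.2.1 hi
  · obtain ⟨i, hi, hi'⟩ := (hg.and hg').exists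
    exact (hQ i).2.2.2 g ⟨hi, hi'⟩

theorem leftOrderable_of_preorders {G : Type*} [Group G] (X : Finset G)
    (hX : Subgroup.closure (X : Set G) = ⊤)
    (h : ∀ k : ℕ, 1 ≤ k → ∃ Q : Set G, Q ⊆ ball X k ∧
      (∀ a ∈ Q, ∀ b ∈ Q, a * b ∈ ball X k → a * b ∈ Q) ∧
      (∀ g ∈ ball X k, g = 1 ∨ g ∈ Q ∨ g⁻¹ ∈ Q) ∧
      (1 : G) ∉ Q ∧ (∀ g : G, ¬(g ∈ Q ∧ g⁻¹ ∈ Q))) :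
    IsLeftOrderable G := by
  choose Q hQ using fun k => (h (k + 1) k.succ_pos).imp fun _ hQ => hQ.2
  obtain ⟨U, hU⟩ := exists_ultrafilter_le (atTop : Filter ℕ)
  have hB : ∀ g, ∀ᶠ k in (U : Filter ℕ), g ∈ ball X (k + 1) := fun g =>
    hU (tendsto_add_atTop_nat 1 |>.eventually (eventually_mem_ball X hX g))
  exact (isPositiveCone_ultralimit U hQ hB).isLeftOrderable
end

section
/- A group G is left-orderable if and only if every finitely generated subgroup of G is left-orderable. -/
/-!
Encode a subset `P ⊆ G` by its indicator in the compact space `G → Bool`. For a finite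
`S ⊆ G`, the indicators of subsemigroups `P` with `1 ∉ P`, `P ∩ P⁻¹ = ∅` and `S ⊆ {1} ∪ P ∪ P⁻¹`
form a closed set, since each condition involves at most three coordinates; it is nonempty
because the positive cone of the finitely generated subgroup `⟨S⟩` is such a `P`. These sets
decrease as `S` grows, so by compactness they have a common point, which is a positive cone
of `G`.
-/

theorem isClosed_setOf_apply₃ {ι X : Type*} [TopologicalSpace X] [DiscreteTopology X]
    (a b c : ι) (p : X → X → X → Prop) : IsClosed {χ : ι → X | p (χ a) (χ b) (χ c)} :=
  IsClosed.preimage (f := fun χ : ι → X => (χ a, χ b, χ c)) (by fun_prop)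
    (isClosed_discrete {x : X × X × X | p x.1 x.2.1 x.2.2})

section

variable {G : Type*} [Group G]

theorem isLeftOrderable_iff_exists_isPositiveCone :
    IsLeftOrderable G ↔ ∃ P : Set G, IsPositiveCone P := by
  constructor
  · rintro ⟨r, hr, hinv⟩
    have hpos : ∀ {g : G}, r g 1 → r 1 g⁻¹ := fun {g} h => by simpa using hinv g⁻¹ _ _ h
    have hneg : ∀ {g : G}, r 1 g⁻¹ → r g 1 := fun {g} h => by simpa using hinv g _ _ h
    refine ⟨{g | r 1 g}, fun a ha b hb => ?_, fun g => ?_, hr.irrefl 1, fun g hg => ?_⟩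
    · exact hr.trans _ _ _ ha (by simpa using hinv a _ _ hb)
    · rcases trichotomous_of r 1 g with h | rfl | h
      exacts [.inr (.inl h), .inl rfl, .inr (.inr (hpos h))]
    · exact hr.irrefl 1 (hr.trans _ _ _ hg.1 (hneg hg.2))
  · rintro ⟨P, hmul, htot, hone, -⟩
    have hord : IsStrictTotalOrder G (fun g h => g⁻¹ * h ∈ P) :=
      { trichotomous a b hab hba := by
          rcases htot (a⁻¹ * b) with h | h | h
          · exact inv_mul_eq_one.mp h
          · exact absurd h hab
          · exact absurd (by simpa using h) hba
        irrefl a := by simpa using hone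
        trans a b c hab hbc := by simpa [mul_assoc] using hmul _ hab _ hbc }
    exact ⟨_, hord, fun f g h hgh => by simpa [mul_assoc] using hgh⟩

theorem IsPositiveCone.preimage {H : Type*} [Group H] {P : Set G} (hP : IsPositiveCone P)
    (f : H →* G) (hf : Function.Injective f) : IsPositiveCone (f ⁻¹' P) := by
  obtain ⟨hmul, htot, hone, hasym⟩ := hP
  refine ⟨fun a ha b hb => ?_, fun g => ?_, by simpa using hone, fun g => ?_⟩
  · simpa using hmul _ ha _ hb
  · rcases htot (f g) with h | h | h
    · exact .inl (hf (by simpa using h))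
    · exact .inr (.inl h)
    · exact .inr (.inr (by simpa using h))
  · simpa using hasym (f g)

def IsPartialPositiveCone (S P : Set G) : Prop :=
  (∀ a ∈ P, ∀ b ∈ P, a * b ∈ P) ∧
  (∀ g ∈ S, g = 1 ∨ g ∈ P ∨ g⁻¹ ∈ P) ∧
  (1 : G) ∉ P ∧
  (∀ g : G, ¬(g ∈ P ∧ g⁻¹ ∈ P))

theorem IsPartialPositiveCone.mono {S T P : Set G} (hST : S ⊆ T)
    (hP : IsPartialPositiveCone T P) : IsPartialPositiveCone S P :=
  ⟨hP.1, fun g hg => hP.2.1 g (hST hg), hP.2.2⟩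

theorem IsPositiveCone.image_subtype (H : Subgroup G) {P : Set H} (hP : IsPositiveCone P) :
    IsPartialPositiveCone H (Subtype.val '' P) := by
  obtain ⟨hmul, htot, hone, hasym⟩ := hP
  refine ⟨?_, fun g hg => ?_, ?_, ?_⟩
  · rintro _ ⟨a, ha, rfl⟩ _ ⟨b, hb, rfl⟩
    exact ⟨a * b, hmul a ha b hb, rfl⟩
  · rcases htot ⟨g, hg⟩ with h | h | h
    · exact .inl (congrArg Subtype.val h)
    · exact .inr (.inl ⟨_, h, rfl⟩)
    · exact .inr (.inr ⟨_, h, rfl⟩)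
  · rintro ⟨a, ha, h1⟩
    exact hone (by rwa [show a = 1 from Subtype.ext h1] at ha)
  · rintro g ⟨⟨a, ha, rfl⟩, ⟨b, hb, hba⟩⟩
    obtain rfl : b = a⁻¹ := Subtype.ext hba
    exact hasym a ⟨ha, hb⟩

theorem isClosed_setOf_isPartialPositiveCone (S : Set G) :
    IsClosed {χ : G → Bool | IsPartialPositiveCone S {g | χ g = true}} := by
  simp only [IsPartialPositiveCone, Set.mem_ofPred_eq, imp_forall_iff, Set.ofPred_and,
    Set.ofPred_forall]
  refine (isClosed_iInter fun a => isClosed_iInter fun b => ?_).inter <|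
    (isClosed_biInter fun g _ => ?_).inter <| IsClosed.inter ?_ <| isClosed_iInter fun g => ?_
  · exact isClosed_setOf_apply₃ a b (a * b) fun x y z => x = true → y = true → z = true
  · exact isClosed_setOf_apply₃ g g⁻¹ g fun x y _ => g = 1 ∨ x = true ∨ y = true
  · exact isClosed_setOf_apply₃ 1 1 1 fun x _ _ => ¬x = true
  · exact isClosed_setOf_apply₃ g g⁻¹ g fun x y _ => ¬(x = true ∧ y = true)

theorem exists_isPositiveCone_of_forall_finset
    (h : ∀ S : Finset G, ∃ P : Set G, IsPartialPositiveCone (S : Set G) P) :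
    ∃ P : Set G, IsPositiveCone P := by
  classical
  let C : Finset G → Set (G → Bool) := fun S =>
    {χ | IsPartialPositiveCone (S : Set G) {g | χ g = true}}
  have hC_closed : ∀ S, IsClosed (C S) := fun S => isClosed_setOf_isPartialPositiveCone _
  have hC_nonempty : ∀ S, (C S).Nonempty := fun S => by
    obtain ⟨P, hP⟩ := h S
    exact ⟨fun g => decide (g ∈ P), by simpa [C] using hP⟩
  have hC_directed : Directed (· ⊇ ·) C := fun S T =>
    ⟨S ∪ T, fun _ hχ => hχ.mono (by simp), fun _ hχ => hχ.mono (by simp)⟩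
  obtain ⟨χ, hχ⟩ := IsCompact.nonempty_iInter_of_directed_nonempty_isCompact_isClosed
    C hC_directed hC_nonempty (fun S => (hC_closed S).isCompact) hC_closed
  have hχC : ∀ S, χ ∈ C S := Set.mem_iInter.mp hχ
  obtain ⟨hmul, -, hone, hasym⟩ := hχC ∅
  exact ⟨_, hmul, fun g => (hχC {g}).2.1 g (by simp), hone, hasym⟩

end

theorem leftOrderable_iff_fg_subgroups {G : Type*} [Group G] :
    IsLeftOrderable G ↔ ∀ H : Subgroup G, H.FG → IsLeftOrderable H := by
  simp only [isLeftOrderable_iff_exists_isPositiveCone]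
  constructor
  · rintro ⟨P, hP⟩ H -
    exact ⟨_, hP.preimage H.subtype H.subtype_injective⟩
  · intro hfg
    refine exists_isPositiveCone_of_forall_finset fun S => ?_
    obtain ⟨P, hP⟩ := hfg (Subgroup.closure S) ⟨S, rfl⟩
    exact ⟨_, (hP.image_subtype _).mono Subgroup.subset_closure⟩
end
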